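/- arXiv:math/0507149 — 5 statements merged into one kernel-verified Lean document; each statement's English description precedes it below -/
import Mathlib

section
/- For any permutation π of {1,...,n} with k weak excedances, the sum A_EE(π) + A_NN(π) + A_EN(π) + A_NE(π) + C_EE(π) + C_NN(π) equals (k-1)(n-k). -/
open Finset


def wexB {n : ℕ} (π : Equiv.Perm (Fin n)) : Finset (Fin n) :=
  Finset.univ.filter (fun i => i ≤ π i)

def wex {n : ℕ} (π : Equiv.Perm (Fin n)) : ℕ := (wexB π).card

def wexbotsum {n : ℕ} (π : Equiv.Perm (Fin n)) : ℕ := ∑ i ∈ wexB π, (i.val + 1)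

def wextopsum {n : ℕ} (π : Equiv.Perm (Fin n)) : ℕ := ∑ i ∈ wexB π, ((π i).val + 1)

def wexbotsSet {n : ℕ} (π : Equiv.Perm (Fin n)) : Finset ℕ :=
  (wexB π).image (fun i => i.val + 1)

def wextopsSet {n : ℕ} (π : Equiv.Perm (Fin n)) : Finset ℕ :=
  (wexB π).image (fun i => (π i).val + 1)

/-- `A_EE`: pairs `(i,j)` with `j < i ≤ π i < π j`. -/
def AEE {n : ℕ} (π : Equiv.Perm (Fin n)) : ℕ :=
  (Finset.univ.filter (fun p : Fin n × Fin n =>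
    p.2 < p.1 ∧ p.1 ≤ π p.1 ∧ π p.1 < π p.2)).card

/-- `A_NN`: pairs `(i,j)` with `π j < π i < i < j`. -/
def ANN {n : ℕ} (π : Equiv.Perm (Fin n)) : ℕ :=
  (Finset.univ.filter (fun p : Fin n × Fin n =>
    π p.2 < π p.1 ∧ π p.1 < p.1 ∧ p.1 < p.2)).card

/-- `A_EN`: pairs `(i,j)` with `j ≤ π j < π i < i`. -/
def AEN {n : ℕ} (π : Equiv.Perm (Fin n)) : ℕ :=
  (Finset.univ.filter (fun p : Fin n × Fin n =>
    p.2 ≤ π p.2 ∧ π p.2 < π p.1 ∧ π p.1 < p.1)).card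

/-- `A_NE`: pairs `(i,j)` with `π i < i < j ≤ π j`. -/
def ANE {n : ℕ} (π : Equiv.Perm (Fin n)) : ℕ :=
  (Finset.univ.filter (fun p : Fin n × Fin n =>
    π p.1 < p.1 ∧ p.1 < p.2 ∧ p.2 ≤ π p.2)).card

/-- `C_EE`: pairs `(i,j)` with `j < i ≤ π j < π i`. -/
def CEE {n : ℕ} (π : Equiv.Perm (Fin n)) : ℕ :=
  (Finset.univ.filter (fun p : Fin n × Fin n =>
    p.2 < p.1 ∧ p.1 ≤ π p.2 ∧ π p.2 < π p.1)).card

/-- `C_NN`: pairs `(i,j)` with `π i < π j < i < j`. -/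
def CNN {n : ℕ} (π : Equiv.Perm (Fin n)) : ℕ :=
  (Finset.univ.filter (fun p : Fin n × Fin n =>
    π p.1 < π p.2 ∧ π p.2 < p.1 ∧ p.1 < p.2)).card

def descents {n : ℕ} (π : Equiv.Perm (Fin n)) : Finset (Fin n) :=
  Finset.univ.filter (fun i => ∃ h : i.val + 1 < n, π ⟨i.val + 1, h⟩ < π i)

def des {n : ℕ} (π : Equiv.Perm (Fin n)) : ℕ := (descents π).card

def destopsum {n : ℕ} (π : Equiv.Perm (Fin n)) : ℕ :=
  ∑ i ∈ descents π, ((π i).val + 1)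

def desbotsum {n : ℕ} (π : Equiv.Perm (Fin n)) : ℕ :=
  ∑ i ∈ descents π, (if h : i.val + 1 < n then (π ⟨i.val + 1, h⟩).val + 1 else 0)

def destopsSet {n : ℕ} (π : Equiv.Perm (Fin n)) : Finset ℕ :=
  (descents π).image (fun i => (π i).val + 1)

def desbotsSet {n : ℕ} (π : Equiv.Perm (Fin n)) : Finset ℕ :=
  (descents π).image
    (fun i => if h : i.val + 1 < n then (π ⟨i.val + 1, h⟩).val + 1 else 0)

def maj {n : ℕ} (π : Equiv.Perm (Fin n)) : ℕ := ∑ i ∈ descents π, (i.val + 1)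

/-- Occurrences of the generalized pattern `(2-31)`. -/
def P2d31 {n : ℕ} (π : Equiv.Perm (Fin n)) : ℕ :=
  (Finset.univ.filter (fun p : Fin n × Fin n =>
    p.1 < p.2 ∧ ∃ h : p.2.val + 1 < n,
      π ⟨p.2.val + 1, h⟩ < π p.1 ∧ π p.1 < π p.2)).card

/-- Occurrences of the generalized pattern `(31-2)`. -/
def P31d2 {n : ℕ} (π : Equiv.Perm (Fin n)) : ℕ :=
  (Finset.univ.filter (fun p : Fin n × Fin n =>
    ∃ h : p.1.val + 1 < n, π ⟨p.1.val + 1, h⟩ < π p.1 ∧ p.1.val + 1 < p.2.val ∧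
      π ⟨p.1.val + 1, h⟩ < π p.2 ∧ π p.2 < π p.1)).card

/-- Occurrences of the generalized pattern `(21-3)`. -/
def P21d3 {n : ℕ} (π : Equiv.Perm (Fin n)) : ℕ :=
  (Finset.univ.filter (fun p : Fin n × Fin n =>
    ∃ h : p.1.val + 1 < n, π ⟨p.1.val + 1, h⟩ < π p.1 ∧ p.1.val + 1 < p.2.val ∧
      π p.1 < π p.2)).card

/-- Occurrences of the generalized pattern `(3-21)`. -/
def P3d21 {n : ℕ} (π : Equiv.Perm (Fin n)) : ℕ :=
  (Finset.univ.filter (fun p : Fin n × Fin n =>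
    p.1 < p.2 ∧ ∃ h : p.2.val + 1 < n,
      π ⟨p.2.val + 1, h⟩ < π p.2 ∧ π p.2 < π p.1)).card

/-- Occurrences of the generalized pattern `(1-32)`. -/
def P1d32 {n : ℕ} (π : Equiv.Perm (Fin n)) : ℕ :=
  (Finset.univ.filter (fun p : Fin n × Fin n =>
    p.1 < p.2 ∧ ∃ h : p.2.val + 1 < n,
      π ⟨p.2.val + 1, h⟩ < π p.2 ∧ π p.1 < π ⟨p.2.val + 1, h⟩)).card

/-- Occurrences of the generalized pattern `(32-1)`. -/
def P32d1 {n : ℕ} (π : Equiv.Perm (Fin n)) : ℕ :=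
  (Finset.univ.filter (fun p : Fin n × Fin n =>
    ∃ h : p.1.val + 1 < n, π ⟨p.1.val + 1, h⟩ < π p.1 ∧ p.1.val + 1 < p.2.val ∧
      π p.2 < π ⟨p.1.val + 1, h⟩)).card


/-- A permutation tableau with `n-k` columns, encoded as a `{0,1,2}`-filling of the full
`k × m` rectangle: the `2`'s are the boxes outside the Young diagram (southeast corner). -/
def IsPermTableau {k m : ℕ} (T : Fin k → Fin m → Fin 3) : Prop :=
  (∀ j : Fin m, ∃ i : Fin k, T i j = 1) ∧
  (∀ (i : Fin k) (j : Fin m), T i j ≠ 2 →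
    ∀ (i' : Fin k) (j' : Fin m), i' ≤ i → j' ≤ j → T i' j' ≠ 2) ∧
  (∀ (i : Fin k) (j : Fin m), T i j = 0 →
    ¬ ((∃ i' < i, T i' j = 1) ∧ (∃ j' < j, T i j' = 1)))

def rowLen {k m : ℕ} (T : Fin k → Fin m → Fin 3) (i : Fin k) : ℕ :=
  (Finset.univ.filter (fun j => T i j ≠ 2)).card

def zerosT {k m : ℕ} (T : Fin k → Fin m → Fin 3) : ℕ :=
  ∑ i, (Finset.univ.filter (fun j => T i j = 0)).card

def onesT {k m : ℕ} (T : Fin k → Fin m → Fin 3) : ℕ :=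
  ∑ i, (Finset.univ.filter (fun j => T i j = 1)).card

def twosT {k m : ℕ} (T : Fin k → Fin m → Fin 3) : ℕ :=
  ∑ i, (Finset.univ.filter (fun j => T i j = 2)).card

/-- A valid `0/1`-filling of the Young diagram with row lengths `lam`. -/
def ValidFilling {k : ℕ} (lam : Fin k → ℕ) (F : ∀ i : Fin k, Fin (lam i) → Bool) : Prop :=
  (∀ (i : Fin k) (j : Fin (lam i)), ∃ (i' : Fin k) (h : (j : ℕ) < lam i'), F i' ⟨j, h⟩ = true) ∧
  (∀ (i : Fin k) (j : Fin (lam i)), F i j = false →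
    ¬ ((∃ (i' : Fin k) (h : (j : ℕ) < lam i'), i' < i ∧ F i' ⟨j, h⟩ = true) ∧
       (∃ j' : Fin (lam i), j' < j ∧ F i j' = true)))

def fillZeros {k : ℕ} {lam : Fin k → ℕ} (F : ∀ i : Fin k, Fin (lam i) → Bool) : ℕ :=
  ∑ i, (Finset.univ.filter (fun j => F i j = false)).card

def fillOnes {k : ℕ} {lam : Fin k → ℕ} (F : ∀ i : Fin k, Fin (lam i) → Bool) : ℕ :=
  ∑ i, (Finset.univ.filter (fun j => F i j = true)).card

open Classical in
/-- `F_λ(p,q)`, evaluated at integers `p`, `q`: the sum over valid fillings of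
`p ^ (#0's) * q ^ (#1's)`. -/
noncomputable def Fval {k : ℕ} (lam : Fin k → ℕ) (p q : ℤ) : ℤ :=
  ∑ F ∈ Finset.univ.filter
      (fun F : ∀ i : Fin k, Fin (lam i) → Bool => ValidFilling lam F),
    p ^ fillZeros F * q ^ fillOnes F

section AuxCount

variable {n : ℕ} (π : Equiv.Perm (Fin n))

private lemma sum_lt_ind (t : Fin n) :
    (∑ x : Fin n, if x < t then 1 else 0) = (t : ℕ) := by
  rw [← Finset.card_filter]
  have h : Finset.univ.filter (fun x : Fin n => x < t) = Finset.Iio t := by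
    ext x; simp
  rw [h, Fin.card_Iio]

private lemma sum_le_ind (t : Fin n) :
    (∑ x : Fin n, if x ≤ t then 1 else 0) = (t : ℕ) + 1 := by
  rw [← Finset.card_filter]
  have h : Finset.univ.filter (fun x : Fin n => x ≤ t) = Finset.Iic t := by
    ext x; simp
  rw [h, Fin.card_Iic]

private lemma sum_pi_lt_ind (t : Fin n) :
    (∑ x : Fin n, if π x < t then 1 else 0) = (t : ℕ) := by
  rw [show (∑ x : Fin n, if π x < t then 1 else 0)
      = ∑ x : Fin n, if x < t then 1 else 0 from
    Equiv.sum_comp π (fun y : Fin n => if y < t then 1 else 0), sum_lt_ind]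

private lemma hinj (i j : Fin n) :
    (i : ℕ) = (j : ℕ) ↔ ((π i : Fin n) : ℕ) = ((π j : Fin n) : ℕ) := by
  simp [Fin.val_eq_val, Equiv.apply_eq_iff_eq]

end AuxCount

theorem aligns_crossings_sum (n : ℕ) (π : Equiv.Perm (Fin n)) :
    AEE π + ANN π + AEN π + ANE π + CEE π + CNN π = (wex π - 1) * (n - wex π) := by
  classical
  have hkval : wex π = ∑ i : Fin n, if i ≤ π i then 1 else 0 := by
    rw [wex, wexB, Finset.card_filter]
  set m : ℕ := ∑ i : Fin n, (if π i < i then 1 else 0) with hm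
  -- wex π + m = n
  have hkm : wex π + m = n := by
    have h := Finset.card_filter_add_card_filter_not
      (s := (Finset.univ : Finset (Fin n))) (p := fun i : Fin n => i ≤ π i)
    rw [Finset.card_univ, Fintype.card_fin] at h
    have h2 : (Finset.univ.filter fun i : Fin n => ¬ i ≤ π i).card = m := by
      rw [hm, Finset.card_filter]
      exact Finset.sum_congr rfl fun i _ => by simp [not_le]
    rw [h2] at h
    exact h
  -- abbreviations for the key double sums
  set SEE : ℕ := ∑ i : Fin n, ∑ j : Fin n,
      (if j < i ∧ i ≤ π j ∧ i ≤ π i then 1 else 0) with hSEE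
  set SNN : ℕ := ∑ i : Fin n, ∑ j : Fin n,
      (if π i < i ∧ π j < i ∧ i ≤ j then 1 else 0) with hSNN
  set X : ℕ := ∑ i : Fin n, ∑ j : Fin n,
      (if π i < i ∧ j ≤ π j ∧ j < i ∧ π i < π j then 1 else 0) with hX
  set ST : ℕ := ∑ i : Fin n, ∑ j : Fin n,
      (if π j < i ∧ i ≤ j then 1 else 0) with hST
  -- Step 1 : AEE + CEE = SEE
  have eq1 : AEE π + CEE π = SEE := by
    rw [AEE, CEE, hSEE, Finset.card_filter, Finset.card_filter,
      Fintype.sum_prod_type, Fintype.sum_prod_type, ← Finset.sum_add_distrib]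
    refine Finset.sum_congr rfl fun i _ => ?_
    rw [← Finset.sum_add_distrib]
    refine Finset.sum_congr rfl fun j _ => ?_
    have hij := hinj π i j
    simp only [Fin.lt_def, Fin.le_def]
    split_ifs <;> omega
  -- Step 2 : ANN + CNN + m = SNN
  have eq2 : ANN π + CNN π + m = SNN := by
    have hDm : m = ∑ i : Fin n, ∑ j : Fin n,
        (if i = j ∧ π i < i then 1 else 0) := by
      rw [hm]
      refine Finset.sum_congr rfl fun i _ => ?_
      by_cases h : π i < i <;> simp [h]
    rw [ANN, CNN, hSNN, hDm, Finset.card_filter, Finset.card_filter,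
      Fintype.sum_prod_type, Fintype.sum_prod_type,
      ← Finset.sum_add_distrib, ← Finset.sum_add_distrib]
    refine Finset.sum_congr rfl fun i _ => ?_
    rw [← Finset.sum_add_distrib, ← Finset.sum_add_distrib]
    refine Finset.sum_congr rfl fun j _ => ?_
    have hij := hinj π i j
    simp only [Fin.lt_def, Fin.le_def, Fin.ext_iff]
    split_ifs <;> omega
  -- Step 3 : AEN + ANE + X = m * wex π
  have eq3 : AEN π + ANE π + X = m * wex π := by
    have hmk : m * wex π = ∑ i : Fin n, ∑ j : Fin n,
        (if π i < i ∧ j ≤ π j then 1 else 0) := by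
      rw [hm, hkval, Finset.sum_mul]
      refine Finset.sum_congr rfl fun i _ => ?_
      by_cases h : π i < i <;> simp [h]
    rw [AEN, ANE, hX, hmk, Finset.card_filter, Finset.card_filter,
      Fintype.sum_prod_type, Fintype.sum_prod_type,
      ← Finset.sum_add_distrib, ← Finset.sum_add_distrib]
    refine Finset.sum_congr rfl fun i _ => ?_
    rw [← Finset.sum_add_distrib, ← Finset.sum_add_distrib]
    refine Finset.sum_congr rfl fun j _ => ?_
    have hij := hinj π i j
    simp only [Fin.lt_def, Fin.le_def]
    split_ifs <;> omega
  -- level-crossing counts agree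
  have hc : ∀ t : Fin n,
      (∑ x : Fin n, if x < t ∧ t ≤ π x then 1 else 0)
        = ∑ x : Fin n, if π x < t ∧ t ≤ x then 1 else 0 := by
    intro t
    have h1 : (∑ x : Fin n, if x < t ∧ t ≤ π x then 1 else 0)
        + (∑ x : Fin n, if x < t ∧ π x < t then 1 else 0) = (t : ℕ) := by
      rw [← Finset.sum_add_distrib, ← sum_lt_ind t]
      refine Finset.sum_congr rfl fun x _ => ?_
      simp only [Fin.lt_def, Fin.le_def]
      split_ifs <;> omega
    have h2 : (∑ x : Fin n, if π x < t ∧ t ≤ x then 1 else 0)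
        + (∑ x : Fin n, if x < t ∧ π x < t then 1 else 0) = (t : ℕ) := by
      rw [← Finset.sum_add_distrib, ← sum_pi_lt_ind π t]
      refine Finset.sum_congr rfl fun x _ => ?_
      simp only [Fin.lt_def, Fin.le_def]
      split_ifs <;> omega
    omega
  -- Step 4 : SEE + SNN = ST
  have eq4 : SEE + SNN = ST := by
    rw [hSEE, hSNN, hST, ← Finset.sum_add_distrib]
    refine Finset.sum_congr rfl fun i _ => ?_
    by_cases h : i ≤ π i
    · have h' : ¬ π i < i := not_lt.mpr h
      simp only [h, and_true, h', false_and, if_false, Finset.sum_const_zero,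
        add_zero]
      exact hc i
    · have h' : π i < i := not_le.mp h
      simp only [h, and_false, if_false, Finset.sum_const_zero, zero_add, h',
        true_and]
  -- Step 5 : ST = X
  have eq5 : ST = X := by
    have ha : ∀ f : Fin n,
        ((π f : Fin n) : ℕ) + (∑ u : Fin n, if u < f ∧ π f < π u then 1 else 0)
          = (f : ℕ) + ∑ u : Fin n, if f < u ∧ π u < π f then 1 else 0 := by
      intro f
      rw [← sum_pi_lt_ind π (π f), ← sum_lt_ind f,
        ← Finset.sum_add_distrib, ← Finset.sum_add_distrib]
      refine Finset.sum_congr rfl fun u _ => ?_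
      have hij := hinj π u f
      simp only [Fin.lt_def]
      split_ifs <;> omega
    have hb : (∑ f : Fin n, if π f < f then ((π f : Fin n) : ℕ) else 0)
          + (∑ i : Fin n, ∑ j : Fin n, if π i < i ∧ j < i ∧ π i < π j then 1 else 0)
        = (∑ f : Fin n, if π f < f then (f : ℕ) else 0)
          + (∑ i : Fin n, ∑ j : Fin n, if π i < i ∧ i < j ∧ π j < π i then 1 else 0) := by
      rw [← Finset.sum_add_distrib, ← Finset.sum_add_distrib]
      refine Finset.sum_congr rfl fun f _ => ?_
      by_cases h : π f < f
      · simp only [h, if_true, true_and]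
        exact ha f
      · simp [h]
    have hsplit : (∑ i : Fin n, ∑ j : Fin n, if π i < i ∧ j < i ∧ π i < π j then 1 else 0)
        = X + (∑ i : Fin n, ∑ j : Fin n,
            if π i < i ∧ j < i ∧ π i < π j ∧ π j < j then 1 else 0) := by
      rw [hX, ← Finset.sum_add_distrib]
      refine Finset.sum_congr rfl fun i _ => ?_
      rw [← Finset.sum_add_distrib]
      refine Finset.sum_congr rfl fun j _ => ?_
      simp only [Fin.lt_def, Fin.le_def]
      split_ifs <;> omega
    have hswap : (∑ i : Fin n, ∑ j : Fin n,
          if π i < i ∧ j < i ∧ π i < π j ∧ π j < j then 1 else 0)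
        = ∑ i : Fin n, ∑ j : Fin n, if π i < i ∧ i < j ∧ π j < π i then 1 else 0 := by
      have step : (∑ i : Fin n, ∑ j : Fin n,
            if π i < i ∧ j < i ∧ π i < π j ∧ π j < j then 1 else 0)
          = ∑ i : Fin n, ∑ j : Fin n, if π j < j ∧ j < i ∧ π i < π j then 1 else 0 := by
        refine Finset.sum_congr rfl fun i _ => ?_
        refine Finset.sum_congr rfl fun j _ => ?_
        simp only [Fin.lt_def]
        split_ifs <;> omega
      rw [step, Finset.sum_comm]
    have hT : (∑ f : Fin n, if π f < f then ((π f : Fin n) : ℕ) else 0) + ST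
        = ∑ f : Fin n, if π f < f then (f : ℕ) else 0 := by
      rw [hST, Finset.sum_comm, ← Finset.sum_add_distrib]
      refine Finset.sum_congr rfl fun f _ => ?_
      by_cases h : π f < f
      · simp only [h, if_true]
        have key : (∑ t : Fin n, if t ≤ π f then 1 else 0)
            + (∑ t : Fin n, if π f < t ∧ t ≤ f then 1 else 0)
            = ∑ t : Fin n, if t ≤ f then 1 else 0 := by
          rw [← Finset.sum_add_distrib]
          refine Finset.sum_congr rfl fun t _ => ?_
          simp only [Fin.lt_def, Fin.le_def]
          split_ifs <;> omega
        rw [sum_le_ind, sum_le_ind] at key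
        omega
      · simp only [h, if_false, zero_add]
        have hz : ∀ t : Fin n, (if π f < t ∧ t ≤ f then 1 else 0) = 0 := by
          intro t
          exact if_neg (by rintro ⟨h1, h2⟩; exact h (h1.trans_le h2))
        simp [hz]
    omega
  -- assemble
  have h6 : AEE π + ANN π + AEN π + ANE π + CEE π + CNN π + m + X
      = (AEE π + CEE π) + (ANN π + CNN π + m) + (AEN π + ANE π + X) := by ring
  rw [eq1, eq2, eq3, eq4, eq5] at h6
  rw [Nat.add_comm X (m * wex π)] at h6
  have key : AEE π + ANN π + AEN π + ANE π + CEE π + CNN π + m = m * wex π :=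
    Nat.add_right_cancel h6
  have hnk : n - wex π = m := by omega
  rw [hnk]
  generalize hK : wex π = K at key ⊢
  cases K with
  | zero =>
    rw [Nat.mul_zero] at key
    have h0 : AEE π + ANN π + AEN π + ANE π + CEE π + CNN π = 0 := by omega
    rw [h0]; simp
  | succ k' =>
    rw [Nat.mul_succ] at key
    have hL := Nat.add_right_cancel key
    rw [hL, Nat.succ_sub_one, Nat.mul_comm]
end

section
/- For any permutation π of {1,...,n}, the sum of occurrences of the patterns (21-3) and (3-21) equals the sum over all descent tops t of π of (n - t). -/
open Finset


/-!
Group the occurrences of both patterns by the descent `i` they involve. A position `j` with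
`π j > π i` is neither `i` nor `i + 1` (as `π (i + 1) < π i`), so it lies either to the right of
`i + 1`, giving an occurrence of `(21-3)`, or to the left of `i`, giving an occurrence of `(3-21)`.
Hence the descent top `π i` contributes exactly `#{j | π i < π j} = n - (π i + 1)`.
-/

theorem Finset.card_filter_prod_fst {α β : Type*} [Fintype α] [Fintype β] [DecidableEq α]
    (s : Finset α) (q : α → β → Prop) [∀ a, DecidablePred (q a)] :
    #{x : α × β | x.1 ∈ s ∧ q x.1 x.2} = ∑ a ∈ s, #{b | q a b} := by
  simp only [card_filter, Fintype.sum_prod_type, ite_and, ← ite_sum_zero, sum_ite_mem, univ_inter]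

theorem Finset.card_filter_prod_snd {α β : Type*} [Fintype α] [Fintype β] [DecidableEq β]
    (s : Finset β) (q : α → β → Prop) [∀ a, DecidablePred (q a)] :
    #{x : α × β | x.2 ∈ s ∧ q x.1 x.2} = ∑ b ∈ s, #{a | q a b} := by
  simp only [card_filter, Fintype.sum_prod_type_right, ite_and, ← ite_sum_zero, sum_ite_mem,
    univ_inter]

theorem Equiv.Perm.card_filter_lt_apply {n : ℕ} (π : Equiv.Perm (Fin n)) (a : Fin n) :
    #{j | a < π j} = n - (a.val + 1) := by
  rw [card_equiv π (t := Ioi a) (by simp), Fin.card_Ioi]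
  omega

theorem P21d3_eq_sum_descents {n : ℕ} (π : Equiv.Perm (Fin n)) :
    P21d3 π = ∑ i ∈ descents π, #{j | i.val + 1 < j.val ∧ π i < π j} := by
  rw [P21d3, ← card_filter_prod_fst]
  exact congrArg card (filter_congr fun x _ => by simp [descents, exists_and_right])

theorem P3d21_eq_sum_descents {n : ℕ} (π : Equiv.Perm (Fin n)) :
    P3d21 π = ∑ i ∈ descents π, #{j | j < i ∧ π i < π j} := by
  rw [P3d21, ← card_filter_prod_snd]
  exact congrArg card (filter_congr fun x _ => by simp [descents, exists_and_right]; tauto)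

theorem card_filter_lt_apply_split_of_mem_descents {n : ℕ} {π : Equiv.Perm (Fin n)} {i : Fin n}
    (hi : i ∈ descents π) :
    #{j | i.val + 1 < j.val ∧ π i < π j} + #{j | j < i ∧ π i < π j} = #{j | π i < π j} := by
  obtain ⟨hsucc, hdes⟩ := (mem_filter.1 hi).2
  rw [← card_union_of_disjoint (disjoint_filter.2 fun j _ h₁ h₂ => by omega), ← filter_or]
  congr 1
  refine filter_congr fun j _ => ⟨by tauto, fun hj => ?_⟩
  have hji : j ≠ i := by rintro rfl; exact lt_irrefl _ hj
  have hjs : j ≠ ⟨i.val + 1, hsucc⟩ := by rintro rfl; exact lt_asymm hdes hj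
  simp only [ne_eq, Fin.ext_iff] at hji hjs
  omega

theorem pattern_21d3_3d21_eq_sum_destops (n : ℕ) (π : Equiv.Perm (Fin n)) :
    P21d3 π + P3d21 π = ∑ i ∈ descents π, (n - ((π i).val + 1)) := by
  rw [P21d3_eq_sum_descents, P3d21_eq_sum_descents, ← sum_add_distrib]
  refine sum_congr rfl fun i hi => ?_
  rw [card_filter_lt_apply_split_of_mem_descents hi, π.card_filter_lt_apply]
end

section
/- For any permutation π of {1,...,n} with k weak excedances, A_EN(π) = C(n,2) - C(n-k,2) + k - wextopsum(π), where wextopsum(π) is the sum of all weak excedance tops of π. -/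
open Finset


lemma sum_card_filter_lt' {α : Type*} [LinearOrder α] [DecidableEq α] (T : Finset α) :
    ∑ t ∈ T, (T.filter (fun x => t < x)).card = T.card.choose 2 := by
  induction T using Finset.strongInduction with
  | _ T ih =>
    rcases T.eq_empty_or_nonempty with rfl | hne
    · simp
    · have haT : T.min' hne ∈ T := T.min'_mem hne
      set a := T.min' hne with ha
      rw [← Finset.add_sum_erase T _ haT]
      have h1 : T.filter (fun x => a < x) = T.erase a := by
        ext x
        simp only [Finset.mem_filter, Finset.mem_erase]
        constructor
        · rintro ⟨hx, hax⟩; exact ⟨(ne_of_lt hax).symm, hx⟩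
        · rintro ⟨hne', hx⟩; exact ⟨hx, lt_of_le_of_ne (T.min'_le x hx) (Ne.symm hne')⟩
      have h2 : ∀ t ∈ T.erase a, (T.filter (fun x => t < x)).card
          = ((T.erase a).filter (fun x => t < x)).card := by
        intro t ht
        rw [Finset.mem_erase] at ht
        congr 1
        rw [Finset.filter_erase, Finset.erase_eq_of_notMem]
        simp only [Finset.mem_filter, not_and]
        intro _
        exact not_lt.2 (T.min'_le t ht.2)
      rw [h1, Finset.sum_congr rfl h2, ih _ (Finset.erase_ssubset haT),
        Finset.card_erase_of_mem haT]
      obtain ⟨m, hm⟩ : ∃ m, T.card = m + 1 :=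
        ⟨T.card - 1, (Nat.succ_pred_eq_of_pos (Finset.card_pos.2 hne)).symm⟩
      rw [hm]
      simp [Nat.choose_succ_succ, Nat.choose_one_right, Nat.add_comm]

lemma two_choose_two' (m : ℕ) : 2 * m.choose 2 + m = m * m := by
  cases m with
  | zero => simp
  | succ s =>
    have h : 2 ∣ (s+1) * s := by
      rw [mul_comm]; exact (Nat.even_mul_succ_self s).two_dvd
    rw [Nat.choose_two_right, Nat.succ_sub_one, Nat.mul_div_cancel' h]
    ring

theorem AEN_eq (n : ℕ) (π : Equiv.Perm (Fin n)) :
    (AEN π : ℤ) = (n.choose 2 : ℤ) - ((n - wex π).choose 2 : ℤ) + (wex π : ℤ)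
      - (wextopsum π : ℤ) := by
  classical
  set S := wexB π with hS
  have step1 : AEN π = ∑ j ∈ S, (univ.filter (fun i => π j < π i ∧ π i < i)).card := by
    rw [AEN, Finset.card_filter, Fintype.sum_prod_type, Finset.sum_comm, hS, wexB,
      Finset.sum_filter]
    refine Finset.sum_congr rfl fun j _ => ?_
    by_cases hj : j ≤ π j
    · rw [if_pos hj, Finset.card_filter]
      simp [hj]
    · simp [hj]
  have step2 : ∀ j ∈ S, (univ.filter (fun i => π j < π i ∧ π i < i)).card
      + (S.filter (fun i => π j < π i)).card = n - 1 - (π j).val := by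
    intro j _
    have hsplit : ((univ.filter (fun i => π j < π i)).filter (fun i => π i < i)).card
        + ((univ.filter (fun i => π j < π i)).filter (fun i => ¬ π i < i)).card
        = (univ.filter (fun i => π j < π i)).card :=
      Finset.card_filter_add_card_filter_not _
    have e1 : (univ.filter (fun i => π j < π i)).filter (fun i => π i < i)
        = univ.filter (fun i => π j < π i ∧ π i < i) := by
      rw [Finset.filter_filter]
    have e2 : (univ.filter (fun i => π j < π i)).filter (fun i => ¬ π i < i)
        = S.filter (fun i => π j < π i) := by
      rw [Finset.filter_filter, hS, wexB, Finset.filter_filter]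
      apply Finset.filter_congr
      intro i _
      simp [not_lt, and_comm]
    rw [e1, e2] at hsplit
    rw [hsplit]
    have himg : (univ.filter (fun i => π j < π i))
        = (univ.filter (fun v => π j < v)).image π.symm := by
      ext i
      simp only [Finset.mem_image, Finset.mem_filter, Finset.mem_univ, true_and]
      constructor
      · intro h; exact ⟨π i, h, π.symm_apply_apply i⟩
      · rintro ⟨v, hv, rfl⟩; simpa using hv
    rw [himg, Finset.card_image_of_injective _ π.symm.injective,
      Finset.filter_lt_eq_Ioi, Fin.card_Ioi]
  have step3 : ∑ j ∈ S, (S.filter (fun i => π j < π i)).card = (wex π).choose 2 := by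
    have hinj : ∀ a ∈ S, ∀ b ∈ S, π a = π b → a = b := fun a _ b _ h => π.injective h
    have himg : ∀ j ∈ S, (S.filter (fun i => π j < π i)).card
        = ((S.image π).filter (fun x => π j < x)).card := by
      intro j _
      rw [← Finset.card_image_of_injective (S.filter (fun i => π j < π i)) π.injective]
      congr 1
      ext x
      simp only [Finset.mem_image, Finset.mem_filter]
      constructor
      · rintro ⟨i, ⟨hi, hlt⟩, rfl⟩; exact ⟨⟨i, hi, rfl⟩, hlt⟩
      · rintro ⟨⟨i, hi, rfl⟩, hlt⟩; exact ⟨i, ⟨hi, hlt⟩, rfl⟩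
    have hre : ∑ t ∈ S.image π, ((S.image π).filter (fun x => t < x)).card
        = ∑ j ∈ S, ((S.image π).filter (fun x => π j < x)).card :=
      Finset.sum_image hinj
    rw [Finset.sum_congr rfl himg, ← hre, sum_card_filter_lt',
      Finset.card_image_of_injective _ π.injective]
    rfl
  have key : AEN π + (wex π).choose 2 = ∑ j ∈ S, (n - 1 - (π j).val) := by
    rw [step1, ← step3, ← Finset.sum_add_distrib]
    exact Finset.sum_congr rfl step2
  have hk : wex π ≤ n := by
    have := Finset.card_le_univ S
    simpa [wex, hS] using this
  have hsum : ((∑ j ∈ S, (n - 1 - (π j).val) : ℕ) : ℤ)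
      = (wex π : ℤ) * n - (wextopsum π : ℤ) := by
    rw [Nat.cast_sum, Finset.sum_congr rfl (fun j (_ : j ∈ S) =>
      (by have := (π j).isLt; omega :
        ((n - 1 - (π j).val : ℕ) : ℤ) = (n : ℤ) - (((π j).val : ℤ) + 1))),
      Finset.sum_sub_distrib, Finset.sum_const, wex, wextopsum]
    push_cast
    ring
  have hZ : (AEN π : ℤ) + ((wex π).choose 2 : ℤ) = (wex π : ℤ) * n - (wextopsum π : ℤ) := by
    rw [← hsum, ← key]; push_cast; ring
  have hnk : ((n - wex π : ℕ) : ℤ) = (n : ℤ) - (wex π : ℤ) := by omega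
  have ek : (2 : ℤ) * ((wex π).choose 2 : ℤ) + (wex π : ℤ) = (wex π : ℤ) * (wex π : ℤ) := by
    exact_mod_cast congrArg (Nat.cast : ℕ → ℤ) (two_choose_two' (wex π))
  have en : (2 : ℤ) * (n.choose 2 : ℤ) + (n : ℤ) = (n : ℤ) * (n : ℤ) := by
    exact_mod_cast congrArg (Nat.cast : ℕ → ℤ) (two_choose_two' n)
  have enk : (2 : ℤ) * (((n - wex π).choose 2 : ℕ) : ℤ) + ((n : ℤ) - (wex π : ℤ))
      = ((n : ℤ) - (wex π : ℤ)) * ((n : ℤ) - (wex π : ℤ)) := by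
    rw [← hnk]
    exact_mod_cast congrArg (Nat.cast : ℕ → ℤ) (two_choose_two' (n - wex π))
  have main : (2 : ℤ) * (AEN π : ℤ) = 2 * ((n.choose 2 : ℤ) - ((n - wex π).choose 2 : ℤ)
      + (wex π : ℤ) - (wextopsum π : ℤ)) := by
    linear_combination 2 * hZ - ek - en + enk
  linarith
end

section
/- For a two-row partition (λ_1, λ_2) with λ_1 ≥ λ_2 ≥ 1, F_{(λ_1,λ_2)}(p,q) = -q^{λ_1-1} p^{λ_2+1} + q^{λ_1-1} (p+q)^{λ_2+1}. -/
open Finset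


/-!
A 0 in the second row needs a 1 above it (its column must contain a 1), so by the filling
rule no 1 lies to its left: the second row reads `0 ⋯ 0 1 ⋯ 1`, say with `b` ones. The
first-row boxes not lying above one of those ones are then forced to be 1, and the remaining
`b` first-row boxes are free. Hence
`F_λ = ∑_{b ≤ λ₂} p ^ (λ₂ - b) q ^ b · q ^ (λ₁ - b) (p + q) ^ b`
`    = q ^ λ₁ ∑_{b ≤ λ₂} (p + q) ^ b p ^ (λ₂ - b)`,
a geometric sum equal to `q ^ (λ₁ - 1) ((p + q) ^ (λ₂ + 1) - p ^ (λ₂ + 1))`.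
-/

theorem sum_pow_card_false_mul_pow_card_true {ι R : Type*} [Fintype ι] [DecidableEq ι]
    [CommSemiring R] (S : Finset ι) (p q : R) :
    ∑ f : ι → Bool with ∀ j ∈ S, f j = true,
        p ^ #{j | f j = false} * q ^ #{j | f j = true} =
      q ^ #S * (p + q) ^ (Fintype.card ι - #S) := by
  have weight_eq_prod (f : ι → Bool) :
      (if ∀ j ∈ S, f j = true then p ^ #{j | f j = false} * q ^ #{j | f j = true} else 0) =
        ∏ j, if f j then q else if j ∈ S then 0 else p := by
    split_ifs with hf
    · rw [prod_ite, prod_const, mul_comm, prod_ite_of_false fun j hj hjS => by simp_all,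
        prod_const]
      simp only [Bool.not_eq_true]
    · push Not at hf
      obtain ⟨j, hjS, hj⟩ := hf
      exact (prod_eq_zero (mem_univ j) (by simp [hj, hjS])).symm
  rw [sum_filter, sum_congr rfl fun f _ => weight_eq_prod f,
    ← Fintype.prod_sum fun j (b : Bool) => if b then q else if j ∈ S then 0 else p]
  simp only [Fintype.sum_bool, if_true, Bool.false_eq_true, if_false, add_ite, add_zero]
  rw [prod_ite, prod_const, prod_const, filter_mem_eq_inter, univ_inter, filter_not,
    filter_mem_eq_inter, univ_inter, card_sdiff_of_subset (subset_univ S), card_univ,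
    add_comm q p]

section MonotoneBool

def boolThreshold (n b : ℕ) : Fin n → Bool := fun j => decide (n ≤ j + b)

theorem monotone_boolThreshold (n b : ℕ) : Monotone (boolThreshold n b) := by
  intro i j hij
  simp only [boolThreshold, Bool.le_iff_imp, decide_eq_true_eq, Fin.le_def] at hij ⊢
  omega

theorem card_boolThreshold {n b : ℕ} (hb : b ≤ n) : #{j | boolThreshold n b j = true} = b := by
  have : univ.filter (fun j => boolThreshold n b j = true) =
      (univ.filter fun j : Fin n => (j : ℕ) < n - b)ᶜ := by
    ext j
    simp only [boolThreshold, mem_filter, mem_univ, true_and, mem_compl, decide_eq_true_eq,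
      not_lt]
    omega
  rw [this, card_compl, Fin.card_filter_val_lt, Fintype.card_fin]
  omega

theorem eq_boolThreshold_of_monotone {n : ℕ} {f : Fin n → Bool} (hf : Monotone f) :
    f = boolThreshold n #{j | f j = true} := by
  funext j
  cases hj : f j
  · have : #{j | f j = true} ≤ n - 1 - j := by
      rw [← Fin.card_Ioi]
      refine card_le_card fun i hi => ?_
      simp only [mem_filter, mem_univ, true_and, mem_Ioi] at hi ⊢
      exact lt_of_not_ge fun hij => by simpa [hj, hi, Bool.le_iff_imp] using hf hij
    simp only [boolThreshold, Bool.false_eq, decide_eq_false_iff_not, not_le]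
    omega
  · have : n - j ≤ #{j | f j = true} := by
      rw [← Fin.card_Ici]
      refine card_le_card fun i hi => ?_
      simp only [mem_filter, mem_univ, true_and, mem_Ici] at hi ⊢
      simpa [hj, Bool.le_iff_imp] using hf hi
    simp only [boolThreshold, Bool.true_eq, decide_eq_true_eq]
    omega

theorem sum_filter_monotone_bool {M : Type*} [AddCommMonoid M] (n : ℕ) (g : ℕ → M) :
    ∑ f : Fin n → Bool with Monotone f, g #{j | f j = true} = ∑ b ∈ range (n + 1), g b :=
  sum_nbij' (fun f => #{j | f j = true}) (boolThreshold n)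
    (fun _ _ => mem_range.2 (Nat.lt_succ_of_le ((card_filter_le _ _).trans (by simp))))
    (fun b _ => mem_filter.2 ⟨mem_univ _, monotone_boolThreshold n b⟩)
    (fun _ hf => (eq_boolThreshold_of_monotone (mem_filter.1 hf).2).symm)
    (fun _ hb => card_boolThreshold (Nat.lt_succ_iff.1 (mem_range.1 hb)))
    (fun _ _ => rfl)

end MonotoneBool

section TwoRows

variable {l1 l2 : ℕ}

def forcedColumns (l1 : ℕ) (f : Fin l2 → Bool) : Finset (Fin l1) :=
  {j | ∀ h : (j : ℕ) < l2, f ⟨j, h⟩ = false}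

theorem card_forcedColumns (h12 : l2 ≤ l1) (f : Fin l2 → Bool) :
    #(forcedColumns l1 f) = l1 - #{j | f j = true} := by
  have : forcedColumns l1 f =
      (({j | f j = true} : Finset (Fin l2)).map (Fin.castLEEmb h12))ᶜ := by
    ext j
    simp only [forcedColumns, mem_filter, mem_univ, true_and, mem_compl, mem_map,
      Fin.castLEEmb_apply]
    constructor
    · rintro hj ⟨i, hi, rfl⟩
      simpa [hi] using hj i.2
    · intro hj h
      by_contra hf
      exact hj ⟨⟨j, h⟩, by simpa using hf, rfl⟩
  rw [this, card_compl, card_map, Fintype.card_fin]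

theorem validFilling_two_rows_iff (h12 : l2 ≤ l1)
    (F : ∀ i : Fin 2, Fin (![l1, l2] i) → Bool) :
    ValidFilling ![l1, l2] F ↔
      Monotone (F 1 : Fin l2 → Bool) ∧
        ∀ j ∈ forcedColumns l1 (F 1 : Fin l2 → Bool), F 0 j = true := by
  simp only [forcedColumns, Fin.isValue, Matrix.cons_val_one, Matrix.cons_val_fin_one,
    mem_filter, mem_univ, true_and]
  simp only [ValidFilling, Fin.exists_fin_two, Fin.isValue, Matrix.cons_val_zero,
    Matrix.cons_val_one, Fin.forall_fin_two, Fin.is_lt, exists_true_left, exists_and_left, not_and,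
    not_exists, Bool.not_eq_true, lt_self_iff_false, false_and, not_lt_zero, or_self,
    IsEmpty.forall_iff, implies_true, zero_lt_one, true_and, or_false, forall_exists_index]
  constructor
  · rintro ⟨⟨hcol1, hcol2⟩, hrule⟩
    refine ⟨fun i j hij => ?_,
      fun j hj => (hcol1 j).resolve_right fun ⟨h, ht⟩ => by simp [hj h] at ht⟩
    rw [Bool.le_iff_imp]
    intro hi
    by_contra hj
    obtain ⟨h, h0⟩ := (hcol2 j).resolve_right hj
    have := hrule j (by simpa using hj) h h0 i (lt_of_le_of_ne hij (by rintro rfl; exact hj hi))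
    simp [hi] at this
  · rintro ⟨hmono, hforced⟩
    refine ⟨⟨fun j => ?_, fun j => ?_⟩, fun j hj _ _ i hij => ?_⟩
    · by_cases h : ∃ h, F 1 ⟨j, h⟩ = true
      · exact Or.inr h
      · exact Or.inl (hforced j (by simpa using h))
    · cases hj : F 1 j
      · exact Or.inl ⟨j.2.trans_le h12, hforced _ fun _ => hj⟩
      · exact Or.inr rfl
    · simpa [hj, Bool.le_iff_imp] using hmono hij.le

theorem Fval_two_rows_eq_sum_monotone (h12 : l2 ≤ l1) (p q : ℤ) :
    Fval ![l1, l2] p q =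
      ∑ f1 : Fin l2 → Bool with Monotone f1, p ^ #{j | f1 j = false} * q ^ #{j | f1 j = true} *
        (q ^ #(forcedColumns l1 f1) * (p + q) ^ (l1 - #(forcedColumns l1 f1))) := by
  classical
  calc Fval ![l1, l2] p q
      = ∑ x : (Fin l1 → Bool) × (Fin l2 → Bool),
          if Monotone x.2 ∧ ∀ j ∈ forcedColumns l1 x.2, x.1 j = true then
            p ^ (#{j | x.1 j = false} + #{j | x.2 j = false}) *
              q ^ (#{j | x.1 j = true} + #{j | x.2 j = true}) else 0 := by
        rw [Fval, sum_filter]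
        refine Fintype.sum_equiv (piFinTwoEquiv _) _ _ fun F => ?_
        refine if_congr (validFilling_two_rows_iff h12 F) ?_ rfl
        simp only [fillZeros, fillOnes, Fin.sum_univ_two]
        rfl
    _ = _ := by
        rw [Fintype.sum_prod_type_right, sum_filter]
        refine sum_congr rfl fun f1 _ => ?_
        simp only [ite_and, sum_ite_irrel, sum_const_zero]
        refine if_congr Iff.rfl ?_ rfl
        have row_sum := sum_pow_card_false_mul_pow_card_true (forcedColumns l1 f1) p q
        rw [Fintype.card_fin] at row_sum
        rw [← row_sum, mul_sum, sum_filter]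
        refine sum_congr rfl fun f0 _ => ?_
        split_ifs <;> ring

theorem Fval_two_rows_eq_sum (h12 : l2 ≤ l1) (p q : ℤ) :
    Fval ![l1, l2] p q = ∑ b ∈ range (l2 + 1), q ^ l1 * ((p + q) ^ b * p ^ (l2 - b)) := by
  rw [Fval_two_rows_eq_sum_monotone h12,
    ← sum_filter_monotone_bool l2 fun b => q ^ l1 * ((p + q) ^ b * p ^ (l2 - b))]
  refine sum_congr rfl fun f1 _ => ?_
  set b := #{j | f1 j = true}
  have hzeros : #{j | f1 j = false} = l2 - b := by
    have := card_filter_add_card_filter_not (s := univ) fun j => f1 j = true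
    simp only [Bool.not_eq_true, card_univ, Fintype.card_fin] at this
    omega
  have hb : b ≤ l1 := (card_filter_le _ _).trans (by simpa using h12)
  have hq : q ^ l1 = q ^ b * q ^ (l1 - b) := by rw [← pow_add, Nat.add_sub_cancel' hb]
  rw [card_forcedColumns h12, hzeros, Nat.sub_sub_self hb, hq]
  ring

end TwoRows

theorem Fval_two_rows (l1 l2 : ℕ) (h2 : 1 ≤ l2) (h12 : l2 ≤ l1) (p q : ℤ) :
    Fval ![l1, l2] p q =
      -(q ^ (l1 - 1) * p ^ (l2 + 1)) + q ^ (l1 - 1) * (p + q) ^ (l2 + 1) := by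
  obtain ⟨k, rfl⟩ : ∃ k, l1 = k + 1 := ⟨l1 - 1, by omega⟩
  have geom := geom_sum₂_mul_add q p (l2 + 1)
  rw [add_tsub_cancel_right, add_comm q p] at geom
  rw [Fval_two_rows_eq_sum h12, ← mul_sum, add_tsub_cancel_right]
  linear_combination q ^ k * geom
end

section
/- Under the bijection Φ from permutation tableaux contained in a k×(n-k) rectangle to permutations in S_n with k weak excedances, the number of 2's of a tableau T (i.e., the number of boxes of the rectangle not in the Young diagram of T) equals A_NE(Φ(T)), the number of alignments of type NE of the permutation. -/
open Finset


/-!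
Under `Φ` the (0-based) weak excedance positions of `π` are `f i = (n - k - λᵢ) + i`, so
`#2's = ∑ᵢ (n - k - λᵢ) = ∑ᵢ f i - C(k, 2)`. On the permutation side, the pairs `(i, j)` with
`i < j` and `j` a weak excedance number `∑ⱼ j = ∑ᵢ f i`; those with `i` a non-excedance are the
`NE` alignments, and those with `i` a weak excedance are the `C(k, 2)` pairs of weak excedances.
-/

section Permutation

variable {n : ℕ} (π : Equiv.Perm (Fin n))

theorem Finset.sum_card_filter_lt {α : Type*} [LinearOrder α] (s : Finset α) :
    ∑ j ∈ s, #{i ∈ s | i < j} = (#s).choose 2 := by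
  rw [← card_product_filter_lt, card_filter, sum_product_right]
  simp only [card_filter]

theorem ANE_eq_sum_wexB : ANE π = ∑ j ∈ wexB π, #{i | π i < i ∧ i < j} := by
  rw [ANE, card_filter, Fintype.sum_prod_type_right, wexB, sum_filter]
  refine sum_congr rfl fun j _ => ?_
  split_ifs with hj
  · rw [card_filter]
    exact sum_congr rfl fun i _ => by simp [hj]
  · simp [hj]

theorem card_filter_not_wex_lt_add (j : Fin n) :
    #{i | π i < i ∧ i < j} + #{i ∈ wexB π | i < j} = j := by
  rw [wexB, filter_filter, ← card_union_of_disjoint]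
  · rw [← Fin.card_Iio j]
    congr 1
    ext i
    simp only [mem_union, mem_filter, mem_univ, true_and, mem_Iio]
    grind
  · exact disjoint_filter.2 fun i _ h₁ h₂ => h₂.1.not_gt h₁.1

theorem ANE_add_choose_two : ANE π + (wex π).choose 2 = ∑ j ∈ wexB π, (j : ℕ) := by
  rw [ANE_eq_sum_wexB, wex, ← sum_card_filter_lt, ← sum_add_distrib]
  exact sum_congr rfl fun j _ => card_filter_not_wex_lt_add π j

theorem card_wexbotsSet : #(wexbotsSet π) = wex π :=
  card_image_of_injective _ fun _ _ h => Fin.ext (Nat.succ_injective h)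

theorem sum_wexbotsSet : ∑ x ∈ wexbotsSet π, x = ∑ j ∈ wexB π, (j : ℕ) + wex π := by
  rw [wexbotsSet, sum_image fun _ _ _ _ h => Fin.ext (Nat.succ_injective h)]
  simp [sum_add_distrib, wex]

end Permutation

section Tableau

variable {k m : ℕ}

theorem IsPermTableau.rowLen_antitone {T : Fin k → Fin m → Fin 3} (hT : IsPermTableau T) :
    Antitone (rowLen T) :=
  fun _ _ hii' => card_le_card fun j hj => by
    simp only [mem_filter, mem_univ, true_and] at hj ⊢
    exact hT.2.1 _ j hj _ j hii' le_rfl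

theorem card_filter_eq_two_add_rowLen (T : Fin k → Fin m → Fin 3) (i : Fin k) :
    #{j | T i j = 2} + rowLen T i = m := by
  rw [rowLen, card_filter_add_card_filter_not, card_univ, Fintype.card_fin]

theorem Fin.sum_univ_val_eq_choose_two (k : ℕ) : ∑ i : Fin k, (i : ℕ) = k.choose 2 := by
  rw [Fin.sum_univ_eq_sum_range (fun i => i), sum_range_id, Nat.choose_two_right]

theorem twosT_add_choose_two (T : Fin k → Fin m → Fin 3) :
    twosT T + k.choose 2 = ∑ i, (m - rowLen T i + i) := by
  rw [twosT, ← Fin.sum_univ_val_eq_choose_two, ← sum_add_distrib]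
  refine sum_congr rfl fun i _ => ?_
  have := card_filter_eq_two_add_rowLen T i
  omega

end Tableau

theorem twos_eq_ANE_general (n k : ℕ) (T : Fin k → Fin (n - k) → Fin 3)
    (hT : IsPermTableau T) (π : Equiv.Perm (Fin n))
    (hΦ : wexbotsSet π =
      Finset.univ.image (fun i : Fin k => n - k - rowLen T i + i.val + 1)) :
    twosT T = ANE π := by
  have hmono : StrictMono fun i : Fin k => n - k - rowLen T i + i.val :=
    Monotone.add_strictMono (fun _ _ h => Nat.sub_le_sub_left (hT.rowLen_antitone h) _)
      Fin.val_strictMono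
  have hinj : Function.Injective fun i : Fin k => n - k - rowLen T i + i.val + 1 :=
    Nat.succ_injective.comp hmono.injective
  have hwex : wex π = k := by
    rw [← card_wexbotsSet, hΦ, card_image_of_injective _ hinj, card_univ, Fintype.card_fin]
  have hsum := sum_wexbotsSet π
  rw [hΦ, sum_image fun _ _ _ _ h => hinj h, sum_add_distrib, hwex] at hsum
  simp only [sum_const, card_univ, Fintype.card_fin, smul_eq_mul, mul_one] at hsum
  have hANE := ANE_add_choose_two π
  have htwos := twosT_add_choose_two T
  rw [hwex] at hANE
  omega

theorem twos_eq_ANE (n k : ℕ) (hk : k ≤ n) (T : Fin k → Fin (n - k) → Fin 3)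
    (hT : IsPermTableau T) (π : Equiv.Perm (Fin n))
    (hΦ : wexbotsSet π =
      Finset.univ.image (fun i : Fin k => n - k - rowLen T i + i.val + 1)) :
    twosT T = ANE π :=
  twos_eq_ANE_general n k T hT π hΦ
end
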